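/- Viewed as a polynomial in α, b_m(α) = (1/m)·∫_{α−1}^{α}(x + 1/2 − α)·∏_{k=0}^{m−1}(k+x) dx has degree m−1 with leading coefficient 1/12, i.e., the coefficient of α^{m−1} equals 1/12, and the coefficient of α^{m−2} equals (1/12)·binomial(m−1, 2). -/

import Mathlib

/-!
Substituting `x = α + t` turns `m · b_m(α)` into `∫_{-1}^{0} (t + 1/2) P(α + t) dt` with
`P = X (X + 1) ⋯ (X + m - 1)`. Expanding `P(α + t) = ∑ⱼ P⁽ʲ⁾(α) tʲ` in Hasse derivatives gives
`m · b_m = ∑ⱼ dⱼ P⁽ʲ⁾` with moments `dⱼ = ∫_{-1}^{0} (t + 1/2) tʲ dt = (-1)^(j+1) j / (2 (j+1) (j+2))`.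
Since `d₀ = 0`, only `P⁽¹⁾` reaches degree `m - 1`, and only `P⁽¹⁾, P⁽²⁾` reach degree `m - 2`;
the top two coefficients of `P` are `1` and `m(m-1)/2`, and `d₁ = -d₂ = 1/12`.
-/

noncomputable def binetB (m : ℕ) (α : ℝ) : ℝ :=
  (1 / (m : ℝ)) * ∫ x in (α - 1)..α, (x + 1/2 - α) * ∏ k ∈ Finset.range m, ((k : ℝ) + x)

open Finset MeasureTheory

namespace Polynomial

section Semiring

variable {R : Type*} [Semiring R]

noncomputable def hasseDerivComb (d : ℕ → R) (p : R[X]) : R[X] :=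
  ∑ j ∈ range (p.natDegree + 1), C (d j) * hasseDeriv j p

theorem coeff_hasseDerivComb (d : ℕ → R) (p : R[X]) (k : ℕ) :
    (hasseDerivComb d p).coeff k =
      ∑ j ∈ range (p.natDegree + 1 - k), d j * ((k + j).choose j * p.coeff (k + j)) := by
  rw [hasseDerivComb, finsetSum_coeff]
  simp only [coeff_C_mul, hasseDeriv_coeff]
  refine (sum_subset (range_subset_range.2 (Nat.sub_le _ _)) fun j _ hj => ?_).symm
  rw [coeff_eq_zero_of_natDegree_lt (by simp at hj; omega), mul_zero, mul_zero]

variable {d : ℕ → R} {p : R[X]}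

theorem coeff_hasseDerivComb_of_natDegree_le (hd : d 0 = 0) {k : ℕ} (hk : p.natDegree ≤ k) :
    (hasseDerivComb d p).coeff k = 0 := by
  rw [coeff_hasseDerivComb]
  refine sum_eq_zero fun j hj => ?_
  obtain rfl : j = 0 := by simp at hj; omega
  rw [hd, zero_mul]

theorem coeff_hasseDerivComb_sub_one (hd : d 0 = 0) {n : ℕ} (hp : p.natDegree = n) (hn : 1 ≤ n) :
    (hasseDerivComb d p).coeff (n - 1) = d 1 * (n * p.coeff n) := by
  rw [coeff_hasseDerivComb, hp, show n + 1 - (n - 1) = 2 by omega, sum_range_succ, sum_range_one,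
    Nat.sub_add_cancel hn, hd, zero_mul, zero_add]
  simp

theorem coeff_hasseDerivComb_sub_two (hd : d 0 = 0) {n : ℕ} (hp : p.natDegree = n) (hn : 2 ≤ n) :
    (hasseDerivComb d p).coeff (n - 2) =
      d 1 * ((n - 1 : ℕ) * p.coeff (n - 1)) + d 2 * (n.choose 2 * p.coeff n) := by
  rw [coeff_hasseDerivComb, hp, show n + 1 - (n - 2) = 3 by omega, sum_range_succ, sum_range_succ,
    sum_range_one, hd, zero_mul, zero_add, show n - 2 + 1 = n - 1 by omega, Nat.sub_add_cancel hn]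
  simp

end Semiring

section CommSemiring

variable {R : Type*} [CommSemiring R]

theorem eval_add_eq_sum_hasseDeriv (p : R[X]) (a t : R) :
    p.eval (a + t) = ∑ j ∈ range (p.natDegree + 1), (hasseDeriv j p).eval a * t ^ j := by
  rw [add_comm, ← taylor_eval, eval_eq_sum_range, natDegree_taylor]
  simp only [taylor_coeff]

theorem eval_hasseDerivComb (d : ℕ → R) (p : R[X]) (a : R) :
    (hasseDerivComb d p).eval a = ∑ j ∈ range (p.natDegree + 1), d j * (hasseDeriv j p).eval a := by
  simp [hasseDerivComb, eval_finsetSum]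

theorem ascPochhammer_eval_eq_prod_range (n : ℕ) (x : R) :
    (ascPochhammer R n).eval x = ∏ k ∈ range n, ((k : R) + x) := by
  induction n with
  | zero => simp
  | succ n ih => rw [ascPochhammer_succ_eval, ih, prod_range_succ, add_comm x]

end CommSemiring

theorem integral_mul_eval_add {w : ℝ → ℝ} {s u : ℝ} (hw : IntervalIntegrable w volume s u)
    (p : ℝ[X]) (a : ℝ) :
    ∫ t in s..u, w t * p.eval (a + t) =
      (hasseDerivComb (fun j => ∫ t in s..u, w t * t ^ j) p).eval a := by
  have hint : ∀ j ∈ range (p.natDegree + 1),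
      IntervalIntegrable (fun t => (hasseDeriv j p).eval a * (w t * t ^ j)) volume s u :=
    fun j _ => (hw.mul_continuousOn (continuous_pow j).continuousOn).const_mul _
  simp_rw [eval_add_eq_sum_hasseDeriv p a, mul_sum, mul_left_comm (w _)]
  rw [intervalIntegral.integral_finsetSum hint, eval_hasseDerivComb]
  simp_rw [intervalIntegral.integral_const_mul, mul_comm]

section ascPochhammer

variable {S : Type*} [Semiring S] [Nontrivial S] [NoZeroDivisors S]

theorem coeff_ascPochhammer_self (n : ℕ) : (ascPochhammer S n).coeff n = 1 := by
  simpa using (monic_ascPochhammer S n).coeff_natDegree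

theorem coeff_ascPochhammer_succ_self (n : ℕ) :
    (ascPochhammer S (n + 1)).coeff n = (n + 1).choose 2 := by
  induction n with
  | zero => simp
  | succ n ih =>
    rw [ascPochhammer_succ_right, mul_add, coeff_add, coeff_mul_X, ih, coeff_mul_natCast,
      coeff_ascPochhammer_self, Nat.choose_succ_succ' (n + 1), Nat.choose_one_right, one_mul,
      add_comm]
    push_cast
    rfl

end ascPochhammer

end Polynomial

open Polynomial

noncomputable def binetMoment (j : ℕ) : ℝ := ∫ t in (-1 : ℝ)..0, (t + 1 / 2) * t ^ j

theorem binetMoment_eq (j : ℕ) :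
    binetMoment j = (-1) ^ (j + 1) * j / (2 * (j + 1) * (j + 2)) := by
  have hsplit : ∀ t : ℝ, (t + 1 / 2) * t ^ j = t ^ (j + 1) + 2⁻¹ * t ^ j := fun t => by ring
  simp_rw [binetMoment, hsplit]
  rw [intervalIntegral.integral_add (intervalIntegral.intervalIntegrable_pow _)
    ((intervalIntegral.intervalIntegrable_pow _).const_mul _), intervalIntegral.integral_const_mul,
    integral_pow, integral_pow]
  field_simp
  push_cast
  ring

theorem binetMoment_zero : binetMoment 0 = 0 := by simp [binetMoment_eq]

theorem binetMoment_one : binetMoment 1 = 1 / 12 := by norm_num [binetMoment_eq]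

theorem binetMoment_two : binetMoment 2 = -(1 / 12) := by norm_num [binetMoment_eq]

noncomputable def binetPoly (m : ℕ) : ℝ[X] :=
  C (1 / (m : ℝ)) * hasseDerivComb binetMoment (ascPochhammer ℝ m)

theorem binetB_eq_eval (m : ℕ) (α : ℝ) : binetB m α = (binetPoly m).eval α := by
  have hshift : ∫ t in (-1 : ℝ)..0, (t + 1 / 2) * (ascPochhammer ℝ m).eval (α + t) =
      ∫ x in (α - 1)..α, (x + 1 / 2 - α) * (ascPochhammer ℝ m).eval x := by
    have := intervalIntegral.integral_comp_add_left
      (fun x => (x + 1 / 2 - α) * (ascPochhammer ℝ m).eval x) (a := -1) (b := 0) α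
    simp only [add_zero, ← sub_eq_add_neg] at this
    rw [← this]
    exact intervalIntegral.integral_congr fun t _ => by ring_nf
  have hw : IntervalIntegrable (fun t : ℝ => t + 1 / 2) volume (-1) 0 :=
    (continuous_add_const _).intervalIntegrable _ _
  rw [binetB, binetPoly, eval_mul, eval_C]
  simp_rw [← ascPochhammer_eval_eq_prod_range, ← hshift]
  rw [integral_mul_eval_add hw]
  rfl

theorem coeff_binetPoly_of_le {m k : ℕ} (hk : m ≤ k) : (binetPoly m).coeff k = 0 := by
  rw [binetPoly, coeff_C_mul, coeff_hasseDerivComb_of_natDegree_le binetMoment_zero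
    (by rwa [ascPochhammer_natDegree]), mul_zero]

theorem coeff_binetPoly_sub_one {m : ℕ} (hm : 1 ≤ m) : (binetPoly m).coeff (m - 1) = 1 / 12 := by
  rw [binetPoly, coeff_C_mul, coeff_hasseDerivComb_sub_one binetMoment_zero
    (ascPochhammer_natDegree ℝ m) hm, coeff_ascPochhammer_self, binetMoment_one]
  have : (m : ℝ) ≠ 0 := by positivity
  field_simp

theorem coeff_binetPoly_sub_two {m : ℕ} (hm : 2 ≤ m) :
    (binetPoly m).coeff (m - 2) = 1 / 12 * (m - 1).choose 2 := by
  have hnext := coeff_ascPochhammer_succ_self (S := ℝ) (m - 1)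
  rw [Nat.sub_add_cancel (by omega)] at hnext
  rw [binetPoly, coeff_C_mul, coeff_hasseDerivComb_sub_two binetMoment_zero
    (ascPochhammer_natDegree ℝ m) hm, coeff_ascPochhammer_self, hnext, binetMoment_one,
    binetMoment_two, Nat.cast_choose_two, Nat.cast_choose_two, Nat.cast_sub (by omega : 1 ≤ m)]
  have : (m : ℝ) ≠ 0 := by positivity
  field_simp
  ring

theorem natDegree_binetPoly {m : ℕ} (hm : 1 ≤ m) : (binetPoly m).natDegree = m - 1 :=
  le_antisymm (natDegree_le_iff_coeff_eq_zero.2 fun _ hk => coeff_binetPoly_of_le (by omega))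
    (le_natDegree_of_ne_zero (by rw [coeff_binetPoly_sub_one hm]; norm_num))

theorem binetB_polynomial_coeffs (m : ℕ) (hm : 1 ≤ m) :
    ∃ p : Polynomial ℝ,
      (∀ α : ℝ, binetB m α = p.eval α) ∧
      p.natDegree = m - 1 ∧
      p.coeff (m - 1) = 1/12 ∧
      (2 ≤ m → p.coeff (m - 2) = (1/12) * ((m - 1).choose 2 : ℝ)) :=
  ⟨binetPoly m, binetB_eq_eval m, natDegree_binetPoly hm, coeff_binetPoly_sub_one hm,
    coeff_binetPoly_sub_two⟩
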